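/- Let ρ = l → r be a linear term rewrite rule and s a linear term. If the rule encoding ρ° is applied at position p in the term encoding s° (i.e., the match morphism m : l° ↣ s° maps the root of l° to the vertex at position p of s° and establishes a match), then there exists a unique morphism α : s° → C[l°↓_X] such that α∘m = t_L and the square with sides m, 1_{l°}, α, t_L is a pullback. -/

import Mathlib

open CategoryTheory
open Classical

noncomputable section

/-- Labeled graphs over a label type `W`. -/
structure LGraph (W : Type) : Type 1 where
  V : Type
  E : Type
  src : E → V
  tgt : E → V
  lV : V → W
  lE : E → W

section Cat

variable {W : Type} [Preorder W]

/-- Label-nondecreasing graph premorphisms: the morphisms of the category `Graph^(L,≤)`. -/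
structure GLHom (G H : LGraph W) : Type where
  onV : G.V → H.V
  onE : G.E → H.E
  src_comm : ∀ e, H.src (onE e) = onV (G.src e)
  tgt_comm : ∀ e, H.tgt (onE e) = onV (G.tgt e)
  lV_le : ∀ v, G.lV v ≤ H.lV (onV v)
  lE_le : ∀ e, G.lE e ≤ H.lE (onE e)

theorem GLHom.ext' {G H : LGraph W} {f g : GLHom G H}
    (h1 : f.onV = g.onV) (h2 : f.onE = g.onE) : f = g := by
  cases f; cases g
  cases h1; cases h2
  rfl

/-- The category `Graph^(L,≤)` of labeled graphs over a preordered label set. -/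
instance : Category (LGraph W) where
  Hom G H := GLHom G H
  id G := { onV := id, onE := id, src_comm := fun _ => rfl, tgt_comm := fun _ => rfl,
            lV_le := fun _ => le_refl _, lE_le := fun _ => le_refl _ }
  comp f g :=
    { onV := g.onV ∘ f.onV
      onE := g.onE ∘ f.onE
      src_comm := fun e => by
        simp only [Function.comp_apply, g.src_comm, f.src_comm]
      tgt_comm := fun e => by
        simp only [Function.comp_apply, g.tgt_comm, f.tgt_comm]
      lV_le := fun v => le_trans (f.lV_le v) (g.lV_le _)
      lE_le := fun e => le_trans (f.lE_le e) (g.lE_le _) }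
  id_comp f := GLHom.ext' rfl rfl
  comp_id f := GLHom.ext' rfl rfl
  assoc f g h := GLHom.ext' rfl rfl

/-- Vertex map of a morphism. -/
abbrev homV {G H : LGraph W} (f : G ⟶ H) : G.V → H.V := GLHom.onV f

/-- Edge map of a morphism. -/
abbrev homE {G H : LGraph W} (f : G ⟶ H) : G.E → H.E := GLHom.onE f

end Cat

/-- A graph is finite if it has finitely many vertices and edges. -/
def FiniteG {W : Type} (G : LGraph W) : Prop := Finite G.V ∧ Finite G.E
/-- The flat lattice on a base label set `A`: a global minimum `⊥`, a global
maximum `⊤`, and all elements of `A` pairwise incomparable. -/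
inductive Flat (A : Type) : Type
  | bot : Flat A
  | el : A → Flat A
  | top : Flat A

namespace Flat

def le {A : Type} : Flat A → Flat A → Prop
  | bot, _ => True
  | _, top => True
  | el a, el b => a = b
  | _, _ => False

instance (A : Type) : Preorder (Flat A) where
  le := Flat.le
  le_refl a := by cases a <;> trivial
  le_trans a b c hab hbc := by
    cases a <;> cases b <;> cases c <;> simp_all [Flat.le]

theorem bot_le {A : Type} (a : Flat A) : (Flat.bot : Flat A) ≤ a := by
  show Flat.le Flat.bot a
  cases a <;> trivial

theorem le_top {A : Type} (a : Flat A) : a ≤ (Flat.top : Flat A) := by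
  show Flat.le a Flat.top
  cases a <;> trivial

theorem le_cases {A : Type} {a b : Flat A} (h : a = Flat.bot ∨ b = Flat.top) : a ≤ b := by
  rcases h with h | h
  · subst h; exact bot_le _
  · subst h; exact le_top _

end Flat

/-- The flat lattice `Σ°` induced by a signature `S` together with the
positive natural numbers (used as edge labels). -/
abbrev FlatL (S : Type) := Flat (S ⊕ ℕ+)
/-- First-order terms over a signature `S` with arity function `ar` and
variable set `X`. -/
inductive Term (S : Type) (ar : S → ℕ) (X : Type) : Type
  | var : X → Term S ar X
  | app : (f : S) → (Fin (ar f) → Term S ar X) → Term S ar X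

namespace Term

variable {S : Type} {ar : S → ℕ} {X : Type}

/-- The subterm of `t` at a position (a list of (0-based) child indices),
if the position exists in `t`. -/
def sub? : Term S ar X → List ℕ → Option (Term S ar X)
  | t, [] => some t
  | .var _, _ :: _ => none
  | .app f ts, i :: p => if h : i < ar f then sub? (ts ⟨i, h⟩) p else none

/-- The set of variables occurring in a term. -/
def vars (t : Term S ar X) : Set X := {x | ∃ p, t.sub? p = some (.var x)}

/-- A term is linear if every variable occurs at most once in it. -/
def Linear (t : Term S ar X) : Prop :=
  ∀ x p q, t.sub? p = some (.var x) → t.sub? q = some (.var x) → p = q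

/-- The head symbol of a term, if any. -/
def head? : Term S ar X → Option S
  | .var _ => none
  | .app f _ => some f

/-- The function symbol at position `p` of `t`, if any. -/
def symAt (t : Term S ar X) (p : List ℕ) : Option S := (t.sub? p).bind head?

theorem sub?_append (t : Term S ar X) (p q : List ℕ) :
    t.sub? (p ++ q) = (t.sub? p).bind (fun s => s.sub? q) := by
  induction p generalizing t with
  | nil => simp [sub?]
  | cons i p ih =>
    cases t with
    | var x => simp [sub?]
    | app f ts =>
      show sub? (.app f ts) (i :: (p ++ q)) = _
      simp only [sub?]
      by_cases h : i < ar f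
      · simp [h, ih]
      · simp [h]

theorem symAt_sub (t : Term S ar X) {p : List ℕ} {f : S} (h : t.symAt p = some f) :
    ∃ ts : Fin (ar f) → Term S ar X, t.sub? p = some (.app f ts) := by
  unfold symAt at h
  cases hs : t.sub? p with
  | none => rw [hs] at h; simp at h
  | some s =>
    rw [hs] at h
    cases s with
    | var x => simp [head?] at h
    | app g ts =>
      simp [head?] at h
      subst h
      exact ⟨ts, rfl⟩

theorem edge_sub?_isSome (t : Term S ar X) {p : List ℕ} {i : ℕ}
    (h : ∃ f, t.symAt p = some f ∧ i < ar f) :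
    ∃ s, t.sub? (p ++ [i]) = some s := by
  obtain ⟨f, hf, hi⟩ := h
  obtain ⟨ts, hts⟩ := t.symAt_sub hf
  refine ⟨ts ⟨i, hi⟩, ?_⟩
  rw [sub?_append, hts]
  simp [sub?, hi]

theorem edge_tgt_var (t : Term S ar X) {p : List ℕ} {i : ℕ}
    (h : ∃ f, t.symAt p = some f ∧ i < ar f)
    (hn : ¬ (t.symAt (p ++ [i])).isSome) :
    ∃ x, t.sub? (p ++ [i]) = some (.var x) := by
  obtain ⟨s, hs⟩ := t.edge_sub?_isSome h
  cases s with
  | var x => exact ⟨x, hs⟩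
  | app g ts => exact absurd (by simp [symAt, hs, head?]) hn

theorem root_var (t : Term S ar X) (h : ¬ (t.symAt []).isSome) :
    ∃ x, t.sub? [] = some (.var x) := by
  cases t with
  | var x => exact ⟨x, rfl⟩
  | app f ts => exact absurd (by simp [symAt, sub?, head?]) h

/-- Vertices of the term encoding: symbol vertices (named by their position)
and variable heads (named by their variable). -/
def encV (t : Term S ar X) : Type :=
  {p : List ℕ // (t.symAt p).isSome} ⊕ {x : X // x ∈ t.vars}

/-- Edges of the term encoding: pairs of a symbol position and a child index. -/
def encE (t : Term S ar X) : Type :=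
  {pi : List ℕ × ℕ // ∃ f, t.symAt pi.1 = some f ∧ pi.2 < ar f}

/-- Target of an edge of the term encoding. -/
noncomputable def encTgt (t : Term S ar X) (e : t.encE) : t.encV :=
  if h : (t.symAt (e.1.1 ++ [e.1.2])).isSome then Sum.inl ⟨e.1.1 ++ [e.1.2], h⟩
  else Sum.inr ⟨Classical.choose (t.edge_tgt_var e.2 h),
    ⟨e.1.1 ++ [e.1.2], Classical.choose_spec (t.edge_tgt_var e.2 h)⟩⟩

/-- The term encoding `t°` of a term `t` as a `Σ°`-labeled graph. -/
noncomputable def enc (t : Term S ar X) : LGraph (FlatL S) where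
  V := t.encV
  E := t.encE
  src e := Sum.inl ⟨e.1.1, by obtain ⟨f, hf, _⟩ := e.2; simp [hf]⟩
  tgt := t.encTgt
  lV v := match v with
    | .inl q => (t.symAt q.1).elim Flat.bot (fun f => Flat.el (Sum.inl f))
    | .inr _ => Flat.bot
  lE e := Flat.el (Sum.inr ⟨e.1.2 + 1, Nat.succ_pos _⟩)

/-- The root of the term encoding (the vertex at position `ε`). -/
noncomputable def encRoot (t : Term S ar X) : t.encV :=
  if h : (t.symAt []).isSome then Sum.inl ⟨[], h⟩
  else Sum.inr ⟨Classical.choose (t.root_var h), ⟨[], Classical.choose_spec (t.root_var h)⟩⟩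

/-- `t.encVertAt p v` says that `v` is the vertex at position `p` in the term
encoding `t°`. -/
def encVertAt (t : Term S ar X) (p : List ℕ) : t.encV → Prop
  | .inl q => q.1 = p
  | .inr x => t.sub? p = some (.var x.1)

/-- The set of variable heads of a term encoding. -/
def varHeads (t : Term S ar X) : Set t.encV := Set.range Sum.inr

/-- Applying a substitution to a term. -/
def subst (σ : X → Term S ar X) : Term S ar X → Term S ar X
  | .var x => σ x
  | .app f ts => .app f (fun i => subst σ (ts i))

end Term

/-- One-hole contexts over a signature. `app f i ts C` is the context
`f(ts 0, …, C, …, ts (n-1))` with `C` at argument position `i`. -/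
inductive Ctx (S : Type) (ar : S → ℕ) (X : Type) : Type
  | hole : Ctx S ar X
  | app : (f : S) → (i : Fin (ar f)) → (Fin (ar f) → Term S ar X) → Ctx S ar X → Ctx S ar X

namespace Ctx

variable {S : Type} {ar : S → ℕ} {X : Type}

/-- Replacing the hole of a context by a term. -/
def fill : Ctx S ar X → Term S ar X → Term S ar X
  | .hole, t => t
  | .app f i ts C, t => .app f (Function.update ts i (C.fill t))

/-- The position of the hole of a context. -/
def holePos : Ctx S ar X → List ℕ
  | .hole => []
  | .app _ i _ C => (i : ℕ) :: C.holePos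

end Ctx

/-- A term rewrite rule `lhs → rhs`: `lhs` is not a variable and all variables
of `rhs` occur in `lhs`. -/
structure TRSRule (S : Type) (ar : S → ℕ) (X : Type) : Type where
  lhs : Term S ar X
  rhs : Term S ar X
  lhs_not_var : ∀ x, lhs ≠ Term.var x
  var_cond : rhs.vars ⊆ lhs.vars

namespace TRSRule

variable {S : Type} {ar : S → ℕ} {X : Type}

/-- A rule is linear if both sides are linear terms. -/
def Linear (ρ : TRSRule S ar X) : Prop := ρ.lhs.Linear ∧ ρ.rhs.Linear

/-- The rewrite step relation generated by a single rule. -/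
def Step (ρ : TRSRule S ar X) (s t : Term S ar X) : Prop :=
  ∃ (C : Ctx S ar X) (σ : X → Term S ar X),
    s = C.fill (ρ.lhs.subst σ) ∧ t = C.fill (ρ.rhs.subst σ)

/-- The rewrite step relation of a rule at a fixed position `p`. -/
def StepAt (ρ : TRSRule S ar X) (p : List ℕ) (s t : Term S ar X) : Prop :=
  ∃ (C : Ctx S ar X) (σ : X → Term S ar X),
    C.holePos = p ∧ s = C.fill (ρ.lhs.subst σ) ∧ t = C.fill (ρ.rhs.subst σ)

end TRSRule

/-- The rewrite relation of a term rewriting system. -/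
def TStep {S : Type} {ar : S → ℕ} {X : Type} (Rs : Set (TRSRule S ar X))
    (s t : Term S ar X) : Prop :=
  ∃ ρ ∈ Rs, ρ.Step s t
section Closures

variable {A : Type}

/-- Upper context closure `C[G]` of a graph rooted at `r`: adds a `⊤`-labeled
context vertex with a `⊤`-labeled edge to the root and a `⊤`-labeled loop. -/
def upperCC (G : LGraph (Flat A)) (r : G.V) : LGraph (Flat A) where
  V := G.V ⊕ Unit
  E := G.E ⊕ Bool
  src e := match e with
    | .inl e => .inl (G.src e)
    | .inr _ => .inr ()
  tgt e := match e with
    | .inl e => .inl (G.tgt e)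
    | .inr true => .inl r
    | .inr false => .inr ()
  lV v := match v with
    | .inl v => G.lV v
    | .inr _ => Flat.top
  lE e := match e with
    | .inl e => G.lE e
    | .inr _ => Flat.top

/-- Lower context closure `G↓_Xs`: relabels every vertex in `Xs` to `⊤` and
adds for it a fresh `⊤`-labeled vertex `x'` with a `⊤`-labeled edge `x → x'`
and a `⊤`-labeled loop on `x'`. -/
noncomputable def lowerCC (G : LGraph (Flat A)) (Xs : Set G.V) : LGraph (Flat A) where
  V := G.V ⊕ Xs
  E := G.E ⊕ (Xs ⊕ Xs)
  src e := match e with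
    | .inl e => .inl (G.src e)
    | .inr (.inl x) => .inl x.1
    | .inr (.inr x) => .inr x
  tgt e := match e with
    | .inl e => .inl (G.tgt e)
    | .inr (.inl x) => .inr x
    | .inr (.inr x) => .inr x
  lV v := match v with
    | .inl v => if v ∈ Xs then Flat.top else G.lV v
    | .inr _ => Flat.top
  lE e := match e with
    | .inl e => G.lE e
    | .inr _ => Flat.top

/-- The context closure `C[G↓_Xs]` of a rooted graph. -/
noncomputable def ctxCC (G : LGraph (Flat A)) (r : G.V) (Xs : Set G.V) : LGraph (Flat A) :=
  upperCC (lowerCC G Xs) (Sum.inl r)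

theorem ctxCC_lV_inl (G : LGraph (Flat A)) (r : G.V) (Xs : Set G.V) (v : G.V) :
    (ctxCC G r Xs).lV (Sum.inl (Sum.inl v)) = if v ∈ Xs then Flat.top else G.lV v := rfl

/-- The typing morphism `G ↣ C[G↓_Xs]` (an inclusion). -/
noncomputable def tCC (G : LGraph (Flat A)) (r : G.V) (Xs : Set G.V) :
    GLHom G (ctxCC G r Xs) where
  onV v := Sum.inl (Sum.inl v)
  onE e := Sum.inl (Sum.inl e)
  src_comm e := rfl
  tgt_comm e := rfl
  lV_le v := by
    rw [ctxCC_lV_inl]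
    split
    · exact Flat.le_top _
    · exact le_refl _
  lE_le e := le_refl _

end Closures

/-- The interface graph `I(t)` of a term `t`: a discrete graph with
`⊥`-labeled vertices `Var(t) ∪ {ε}`. -/
def interfaceG {S : Type} {ar : S → ℕ} {X : Type} (t : Term S ar X) : LGraph (FlatL S) where
  V := {x : X // x ∈ t.vars} ⊕ Unit
  E := Empty
  src e := e.elim
  tgt e := e.elim
  lV _ := Flat.bot
  lE e := e.elim

/-- The variable vertices of an interface graph. -/
def interfaceVars {S : Type} {ar : S → ℕ} {X : Type} (t : Term S ar X) :
    Set (interfaceG t).V := Set.range Sum.inl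
/-- A PBPO⁺ rewrite rule. -/
structure PBPORule (W : Type) [Preorder W] : Type 1 where
  L : LGraph W
  K : LGraph W
  R : LGraph W
  L' : LGraph W
  K' : LGraph W
  l : K ⟶ L
  r : K ⟶ R
  l' : K' ⟶ L'
  tL : L ⟶ L'
  tK : K ⟶ K'

/-- A PBPO⁺ rewrite step `G_L ⇒_ρ^α G_R`, consisting of a monic match `m`, an
adherence morphism `α` making the match square a pullback, the pullback `G_K`
of `α` along `l'`, and the pushout `G_R` of `r` along `u`. -/
structure RewriteStep {W : Type} [Preorder W] (ρ : PBPORule W) (G₀ G₁ : LGraph W) :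
    Type 1 where
  m : ρ.L ⟶ G₀
  mono_m : Mono m
  α : G₀ ⟶ ρ.L'
  matchPB : IsPullback (𝟙 ρ.L) m ρ.tL α
  GK : LGraph W
  gL : GK ⟶ G₀
  u' : GK ⟶ ρ.K'
  pbK : IsPullback gL u' α ρ.l'
  u : ρ.K ⟶ GK
  u_u' : u ≫ u' = ρ.tK
  u_gL : u ≫ gL = ρ.l ≫ m
  w : ρ.R ⟶ G₁
  gR : GK ⟶ G₁
  po : IsPushout ρ.r u w gR

/-- `G ⇒_ρ H` : there exists a PBPO⁺ rewrite step from `G` to `H` via `ρ`. -/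
def PBPOStep {W : Type} [Preorder W] (ρ : PBPORule W) (G H : LGraph W) : Prop :=
  Nonempty (RewriteStep ρ G H)

/-- A match `m` establishes a match (of the rule `ρ`) if it is monic and some
adherence morphism makes the match square a pullback. -/
def EstablishesMatch {W : Type} [Preorder W] (ρ : PBPORule W) {G : LGraph W}
    (m : ρ.L ⟶ G) : Prop :=
  Mono m ∧ ∃ α : G ⟶ ρ.L', m ≫ α = ρ.tL ∧ IsPullback (𝟙 ρ.L) m ρ.tL α

section RuleEnc

variable {S : Type} {ar : S → ℕ} {X : Type}

/-- The morphism `l : K → L` of the rule encoding. -/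
noncomputable def encKtoL (ρ : TRSRule S ar X) : GLHom (interfaceG ρ.rhs) ρ.lhs.enc where
  onV v := match v with
    | .inl x => Sum.inr ⟨x.1, ρ.var_cond x.2⟩
    | .inr _ => ρ.lhs.encRoot
  onE e := e.elim
  src_comm e := e.elim
  tgt_comm e := e.elim
  lV_le v := by cases v <;> exact Flat.bot_le _
  lE_le e := e.elim

/-- The morphism `r : K → R` of the rule encoding. -/
noncomputable def encKtoR (ρ : TRSRule S ar X) : GLHom (interfaceG ρ.rhs) ρ.rhs.enc where
  onV v := match v with
    | .inl x => Sum.inr x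
    | .inr _ => ρ.rhs.encRoot
  onE e := e.elim
  src_comm e := e.elim
  tgt_comm e := e.elim
  lV_le v := by cases v <;> exact Flat.bot_le _
  lE_le e := e.elim

/-- Mapping the primed (lower-closure) vertices of `K'` to those of `L'`. -/
noncomputable def mapPrime (ρ : TRSRule S ar X) :
    ↥(interfaceVars ρ.rhs) → ↥(ρ.lhs.varHeads) :=
  fun x' => match x' with
  | ⟨.inl x, _⟩ => ⟨Sum.inr ⟨x.1, ρ.var_cond x.2⟩, ⟨⟨x.1, ρ.var_cond x.2⟩, rfl⟩⟩
  | ⟨.inr u, h⟩ => absurd h (by rintro ⟨y, hy⟩; exact Sum.inl_ne_inr hy)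

/-- The morphism `l' : K' → L'` of the rule encoding. -/
noncomputable def encl' (ρ : TRSRule S ar X) :
    GLHom (ctxCC (interfaceG ρ.rhs) (Sum.inr ()) (interfaceVars ρ.rhs))
      (ctxCC ρ.lhs.enc ρ.lhs.encRoot ρ.lhs.varHeads) where
  onV v := match v with
    | .inl (.inl (.inl x)) => .inl (.inl (Sum.inr ⟨x.1, ρ.var_cond x.2⟩))
    | .inl (.inl (.inr _)) => .inl (.inl ρ.lhs.encRoot)
    | .inl (.inr x') => .inl (.inr (mapPrime ρ x'))
    | .inr u => .inr u
  onE e := match e with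
    | .inl (.inl e) => e.elim
    | .inl (.inr (.inl x')) => .inl (.inr (.inl (mapPrime ρ x')))
    | .inl (.inr (.inr x')) => .inl (.inr (.inr (mapPrime ρ x')))
    | .inr b => .inr b
  src_comm := by
    rintro ((e | (⟨(x | u), hv⟩ | ⟨(x | u), hv⟩)) | b)
    · exact e.elim
    · rfl
    · exact absurd hv (by rintro ⟨y, hy⟩; exact Sum.inl_ne_inr hy)
    · rfl
    · exact absurd hv (by rintro ⟨y, hy⟩; exact Sum.inl_ne_inr hy)
    · rfl
  tgt_comm := by
    rintro ((e | (x' | x')) | b)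
    · exact e.elim
    · rfl
    · rfl
    · cases b <;> rfl
  lV_le := by
    rintro (((x | u) | x') | c)
    · refine Flat.le_cases (Or.inr ?_)
      refine (ctxCC_lV_inl ρ.lhs.enc ρ.lhs.encRoot ρ.lhs.varHeads
        (Sum.inr ⟨x.1, ρ.var_cond x.2⟩)).trans ?_
      exact if_pos ⟨⟨x.1, ρ.var_cond x.2⟩, rfl⟩
    · refine Flat.le_cases (Or.inl ?_)
      refine (ctxCC_lV_inl (interfaceG ρ.rhs) (Sum.inr ()) (interfaceVars ρ.rhs)
        (Sum.inr u)).trans ?_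
      exact (if_neg (by rintro ⟨y, hy⟩; exact Sum.inl_ne_inr hy)).trans rfl
    · exact Flat.le_cases (Or.inr rfl)
    · exact Flat.le_cases (Or.inr rfl)
  lE_le := by
    rintro ((e | (x' | x')) | b)
    · exact e.elim
    · exact Flat.le_cases (Or.inr rfl)
    · exact Flat.le_cases (Or.inr rfl)
    · exact Flat.le_cases (Or.inr rfl)

/-- The rule encoding `ρ°` of a term rewrite rule `ρ : l → r` as a PBPO⁺ rule. -/
noncomputable def ruleEnc (ρ : TRSRule S ar X) : PBPORule (FlatL S) where
  L := ρ.lhs.enc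
  K := interfaceG ρ.rhs
  R := ρ.rhs.enc
  L' := ctxCC ρ.lhs.enc ρ.lhs.encRoot ρ.lhs.varHeads
  K' := ctxCC (interfaceG ρ.rhs) (Sum.inr ()) (interfaceVars ρ.rhs)
  l := encKtoL ρ
  r := encKtoR ρ
  l' := encl' ρ
  tL := tCC ρ.lhs.enc ρ.lhs.encRoot ρ.lhs.varHeads
  tK := tCC (interfaceG ρ.rhs) (Sum.inr ()) (interfaceVars ρ.rhs)

/-- The rewrite relation of an encoded term rewriting system `R°`. -/
def SysStep (Rs : Set (TRSRule S ar X)) (G H : LGraph (FlatL S)) : Prop :=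
  ∃ ρ ∈ Rs, PBPOStep (ruleEnc ρ) G H

end RuleEnc
section Cycles

variable {W : Type}

/-- `IsUPath G u es v`: `es` is an undirected path from `u` to `v` in `G`. -/
def IsUPath (G : LGraph W) : G.V → List G.E → G.V → Prop
  | u, [], v => u = v
  | u, e :: es, v =>
      (G.src e = u ∧ IsUPath G (G.tgt e) es v) ∨ (G.tgt e = u ∧ IsUPath G (G.src e) es v)

/-- An undirected cycle at `v`: a nonempty undirected path from `v` to `v`
with pairwise distinct edges. -/
def IsUCycle (G : LGraph W) (v : G.V) (es : List G.E) : Prop :=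
  es ≠ [] ∧ es.Nodup ∧ IsUPath G v es v

/-- A cycle edge is an edge lying on some undirected cycle. -/
def CycleEdge (G : LGraph W) (e : G.E) : Prop :=
  ∃ v es, IsUCycle G v es ∧ e ∈ es

/-- A graph is cycle-free if it contains no undirected cycle. -/
def CycleFree (G : LGraph W) : Prop := ¬ ∃ v es, IsUCycle G v es

/-- `[G]`: the graph obtained from `G` by deleting all cycle edges. -/
def dropCycles (G : LGraph W) : LGraph W where
  V := G.V
  E := {e : G.E // ¬ CycleEdge G e}
  src e := G.src e.1
  tgt e := G.tgt e.1
  lV := G.lV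
  lE e := G.lE e.1

end Cycles

section Zones

variable {S : Type}

/-- A vertex is in-well-formed if it has at most one incoming edge. -/
def InWF (G : LGraph (FlatL S)) (v : G.V) : Prop :=
  ∀ e e' : G.E, G.tgt e = v → G.tgt e' = v → e = e'

/-- A vertex is out-well-formed if its label is a function symbol `f` and it
has exactly `ar f` outgoing edges, labeled `1, …, ar f`. -/
def OutWF (G : LGraph (FlatL S)) (ar : S → ℕ) (v : G.V) : Prop :=
  ∃ f : S, G.lV v = Flat.el (Sum.inl f) ∧
    ∃ φ : Fin (ar f) ≃ {e : G.E // G.src e = v},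
      ∀ i, G.lE (φ i).1 = Flat.el (Sum.inr ⟨(i : ℕ) + 1, Nat.succ_pos _⟩)

/-- A vertex is good if it is out-well-formed and all its children are
in-well-formed; otherwise it is bad. -/
def Good (G : LGraph (FlatL S)) (ar : S → ℕ) (v : G.V) : Prop :=
  OutWF G ar v ∧ ∀ e : G.E, G.src e = v → InWF G (G.tgt e)

/-- The edges included in a zone by the zoning algorithm are exactly the edges
with a good source. -/
def ZoneEdge (G : LGraph (FlatL S)) (ar : S → ℕ) (e : G.E) : Prop :=
  Good G ar (G.src e)

/-- One directed step along an edge included in a zone. -/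
def ZStep (G : LGraph (FlatL S)) (ar : S → ℕ) (u v : G.V) : Prop :=
  ∃ e, ZoneEdge G ar e ∧ G.src e = u ∧ G.tgt e = v

/-- Two vertices lie in the same zone iff they are connected by edges included
in zones (equivalence closure of `ZStep`). -/
def SameZone (G : LGraph (FlatL S)) (ar : S → ℕ) : G.V → G.V → Prop :=
  Relation.EqvGen (ZStep G ar)

/-- A root of a zone: a vertex with no parent inside its zone. -/
def IsZoneRoot (G : LGraph (FlatL S)) (ar : S → ℕ) (r : G.V) : Prop :=
  ¬ ∃ e, ZoneEdge G ar e ∧ G.tgt e = r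

/-- A directed path along zone edges. -/
def IsZPath (G : LGraph (FlatL S)) (ar : S → ℕ) : G.V → List G.E → G.V → Prop
  | u, [], v => u = v
  | u, e :: es, v => ZoneEdge G ar e ∧ G.src e = u ∧ IsZPath G ar (G.tgt e) es v

/-- The zone of `v₀`, as a subgraph of `G`, with every bad vertex relabeled
with `⊥`. -/
noncomputable def zoneTermGraph (G : LGraph (FlatL S)) (ar : S → ℕ) (v₀ : G.V) :
    LGraph (FlatL S) where
  V := {u : G.V // SameZone G ar u v₀}
  E := {e : G.E // ZoneEdge G ar e ∧ SameZone G ar (G.src e) v₀}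
  src e := ⟨G.src e.1, e.2.2⟩
  tgt e := ⟨G.tgt e.1,
    Relation.EqvGen.trans _ _ _
      (Relation.EqvGen.symm _ _ (Relation.EqvGen.rel _ _ ⟨e.1, e.2.1, rfl, rfl⟩)) e.2.2⟩
  lV u := if Good G ar u.1 then G.lV u.1 else Flat.bot
  lE e := G.lE e.1

end Zones

section Relabel

variable {W : Type}

/-- `G` with the label of vertex `v` changed to `l`. -/
noncomputable def relabelV (G : LGraph W) (v : G.V) (l : W) : LGraph W :=
  { G with lV := Function.update G.lV v l }

/-- `G` with the label of every vertex in `s` changed to `l`. -/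
noncomputable def relabelSet (G : LGraph W) (s : Set G.V) (l : W) : LGraph W :=
  { G with lV := fun u => if u ∈ s then l else G.lV u }

end Relabel

/-!
Existence of `α` is part of `m` establishing a match, so the content is uniqueness, and we
fix `α` on the vertices of `s°` position by position from the root. On the image of `m` it
is forced by `α ∘ m = t_L`. The vertices strictly above position `p` must go to the context
vertex `C`: in `C[l°↓]` the only edges into the root of `l°` or into `C` leave `C`. Any other
vertex is the target of an edge whose source is already fixed, and in `C[l°↓]` the out-edges
of a vertex are told apart by their labels, except for the two out-edges of `C`; these differ
in whether they hit the root of `l°`, and by the pullback property only `m(root)` is sent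
there. Finally, edges of `C[l°↓]` are determined by their endpoints and labels.
-/

theorem Flat.el_le_el_iff {A : Type} {a b : A} : (Flat.el a ≤ Flat.el b) ↔ a = b := Iff.rfl

namespace LGraph

variable {W : Type} [Preorder W]

def point (w : W) : LGraph W where
  V := Unit
  E := Empty
  src := Empty.elim
  tgt := Empty.elim
  lV _ := w
  lE := Empty.elim

def pointHom {w : W} {G : LGraph W} (v : G.V) (h : w ≤ G.lV v) : point w ⟶ G where
  onV _ := v
  onE := Empty.elim
  src_comm e := e.elim
  tgt_comm e := e.elim
  lV_le _ := h
  lE_le e := e.elim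

theorem exists_homV_of_isPullback {P X Y Z : LGraph W} {fst : P ⟶ X} {snd : P ⟶ Y}
    {f : X ⟶ Z} {g : Y ⟶ Z} (hpb : IsPullback fst snd f g) {x : X.V} {y : Y.V}
    (hxy : homV f x = homV g y) {w : W} (hx : w ≤ X.lV x) (hy : w ≤ Y.lV y) :
    ∃ z, homV fst z = x ∧ homV snd z = y := by
  have hcomm : pointHom x hx ≫ f = pointHom y hy ≫ g :=
    GLHom.ext' (funext fun _ => hxy) (funext fun e => e.elim)
  exact ⟨homV (hpb.lift _ _ hcomm) (),
    congrFun (congrArg GLHom.onV (hpb.lift_fst _ _ hcomm)) (),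
    congrFun (congrArg GLHom.onV (hpb.lift_snd _ _ hcomm)) ()⟩

end LGraph

namespace Term

variable {S : Type} {ar : S → ℕ} {X : Type}

theorem isSome_sub?_of_isSome_symAt {t : Term S ar X} {q : List ℕ} (h : (t.symAt q).isSome) :
    (t.sub? q).isSome := by
  unfold symAt at h
  cases hs : t.sub? q <;> simp_all

theorem isSome_sub?_of_isSome_sub?_append {t : Term S ar X} {q r : List ℕ}
    (h : (t.sub? (q ++ r)).isSome) : (t.sub? q).isSome := by
  rw [sub?_append] at h
  cases hs : t.sub? q <;> simp_all

theorem exists_symAt_of_isSome_sub?_concat {t : Term S ar X} {q : List ℕ} {i : ℕ}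
    (h : (t.sub? (q ++ [i])).isSome) : ∃ f, t.symAt q = some f ∧ i < ar f := by
  rw [sub?_append] at h
  cases hs : t.sub? q with
  | none => simp [hs] at h
  | some u =>
    cases u with
    | var x => simp [hs, sub?] at h
    | app f ts =>
      refine ⟨f, by simp [symAt, hs, head?], ?_⟩
      by_contra hi
      simp [hs, sub?, hi] at h

theorem encVertAt_unique {t : Term S ar X} {q : List ℕ} {v v' : t.encV}
    (h : t.encVertAt q v) (h' : t.encVertAt q v') : v = v' := by
  rcases v with ⟨a, ha⟩ | ⟨x, hx⟩ <;> rcases v' with ⟨b, hb⟩ | ⟨y, hy⟩ <;>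
    simp only [encVertAt] at h h'
  · subst h h'; rfl
  · subst h; simp [symAt, h', head?] at ha
  · subst h'; simp [symAt, h, head?] at hb
  · rw [h] at h'; cases h'; rfl

theorem isSome_sub?_of_encVertAt {t : Term S ar X} {q : List ℕ} {v : t.encV}
    (h : t.encVertAt q v) : (t.sub? q).isSome := by
  rcases v with ⟨a, ha⟩ | x
  · exact h ▸ isSome_sub?_of_isSome_symAt ha
  · have hx : t.sub? q = some (.var x.1) := h
    simp [hx]

theorem exists_encVertAt (t : Term S ar X) (v : t.encV) : ∃ q, t.encVertAt q v := by
  rcases v with ⟨a, _⟩ | ⟨x, q, hq⟩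
  exacts [⟨a, rfl⟩, ⟨q, hq⟩]

theorem encVertAt_encTgt (t : Term S ar X) (e : t.encE) :
    t.encVertAt (e.1.1 ++ [e.1.2]) (t.encTgt e) := by
  by_cases h : (t.symAt (e.1.1 ++ [e.1.2])).isSome
  · rw [show t.encTgt e = .inl ⟨_, h⟩ from dif_pos h]; rfl
  · rw [show t.encTgt e = .inr ⟨_, _, Classical.choose_spec (t.edge_tgt_var e.2 h)⟩
      from dif_neg h]
    exact Classical.choose_spec (t.edge_tgt_var e.2 h)

theorem exists_encE_of_isSome_sub? {t : Term S ar X} {q : List ℕ} {i : ℕ}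
    (h : (t.sub? (q ++ [i])).isSome) :
    ∃ e : t.encE, t.encVertAt q (t.enc.src e) ∧ t.encVertAt (q ++ [i]) (t.enc.tgt e) :=
  let ⟨f, hf, hi⟩ := exists_symAt_of_isSome_sub?_concat h
  ⟨⟨(q, i), f, hf, hi⟩, rfl, t.encVertAt_encTgt _⟩

theorem encTgt_ne_encRoot (t : Term S ar X) (e : t.encE) : t.encTgt e ≠ t.encRoot := by
  obtain ⟨⟨q, i⟩, f, hf, hi⟩ := e
  cases t with
  | var x => cases q <;> simp [symAt, sub?, head?] at hf
  | app g ts =>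
    have hroot : (Term.app g ts).encRoot = .inl ⟨[], by simp [symAt, sub?, head?]⟩ :=
      dif_pos _
    intro h
    have hpos := (Term.app g ts).encVertAt_encTgt ⟨(q, i), f, hf, hi⟩
    rw [h, hroot] at hpos
    simp [encVertAt] at hpos

-- The type graph `C[t°↓]` of a rule with left-hand side `t`.
abbrev encCC (t : Term S ar X) : LGraph (FlatL S) := ctxCC t.enc t.encRoot t.varHeads

theorem encCC_eq_inr_true_of_tgt_eq_root {t : Term S ar X} {a : t.encCC.E}
    (h : t.encCC.tgt a = .inl (.inl t.encRoot)) : a = .inr true := by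
  rcases a with (e | x | x) | (_ | _)
  · exact absurd (Sum.inl_injective (Sum.inl_injective h)) (t.encTgt_ne_encRoot e)
  all_goals simp_all [encCC, ctxCC, upperCC, lowerCC]

theorem encCC_src_eq_ctx {t : Term S ar X} {a : t.encCC.E}
    (h : t.encCC.tgt a = .inl (.inl t.encRoot) ∨ t.encCC.tgt a = .inr ()) :
    t.encCC.src a = .inr () := by
  rcases h with h | h
  · rw [encCC_eq_inr_true_of_tgt_eq_root h]; rfl
  · rcases a with (e | x | x) | (_ | _) <;> simp_all [encCC, ctxCC, upperCC, lowerCC]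

-- The two out-edges of the context vertex both carry `⊤`; only their targets tell them apart.
theorem encCC_edge_eq_of_src_eq {t : Term S ar X} {a b : t.encCC.E} {i : ℕ}
    (hsrc : t.encCC.src a = t.encCC.src b)
    (ha : Flat.el (.inr ⟨i + 1, i.succ_pos⟩) ≤ t.encCC.lE a)
    (hb : Flat.el (.inr ⟨i + 1, i.succ_pos⟩) ≤ t.encCC.lE b)
    (hta : t.encCC.tgt a ≠ .inl (.inl t.encRoot))
    (htb : t.encCC.tgt b ≠ .inl (.inl t.encRoot)) : a = b := by
  rcases a with (⟨⟨q, j⟩, _⟩ | ⟨_, x, rfl⟩ | ⟨_, x, rfl⟩) | (_ | _) <;>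
    rcases b with (⟨⟨q', j'⟩, _⟩ | ⟨_, y, rfl⟩ | ⟨_, y, rfl⟩) | (_ | _) <;>
    dsimp only [encCC, ctxCC, upperCC, lowerCC, enc] at hsrc ha hb hta htb ⊢ <;>
    cases hsrc
  · cases (Flat.el_le_el_iff.mp ha).symm.trans (Flat.el_le_el_iff.mp hb)
    rfl
  all_goals first | rfl | exact absurd rfl hta | exact absurd rfl htb

theorem encCC_edge_eq_of_src_eq_of_tgt_eq {t : Term S ar X} {a b : t.encCC.E} {i : ℕ}
    (hsrc : t.encCC.src a = t.encCC.src b) (htgt : t.encCC.tgt a = t.encCC.tgt b)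
    (ha : Flat.el (.inr ⟨i + 1, i.succ_pos⟩) ≤ t.encCC.lE a)
    (hb : Flat.el (.inr ⟨i + 1, i.succ_pos⟩) ≤ t.encCC.lE b) : a = b := by
  by_cases hroot : t.encCC.tgt a = .inl (.inl t.encRoot)
  · rw [encCC_eq_inr_true_of_tgt_eq_root hroot,
      encCC_eq_inr_true_of_tgt_eq_root (htgt.symm.trans hroot)]
  · exact encCC_edge_eq_of_src_eq hsrc ha hb hroot (htgt ▸ hroot)

theorem encCC_hom_ext {s t : Term S ar X} {α β : s.enc ⟶ t.encCC}
    (h : ∀ v, homV α v = homV β v) : α = β := by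
  refine GLHom.ext' (funext h) (funext fun e => ?_)
  refine encCC_edge_eq_of_src_eq_of_tgt_eq ?_ ?_ (GLHom.lE_le α e) (GLHom.lE_le β e)
  · rw [GLHom.src_comm α e, GLHom.src_comm β e]; exact h _
  · rw [GLHom.tgt_comm α e, GLHom.tgt_comm β e]; exact h _

section Adherence

variable {l s : Term S ar X} (m : l.enc ⟶ s.enc)

def IsAdherence (α : s.enc ⟶ l.encCC) : Prop :=
  m ≫ α = tCC l.enc l.encRoot l.varHeads ∧
    IsPullback (𝟙 l.enc) m (tCC l.enc l.encRoot l.varHeads) α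

variable {m}

theorem homV_eq_ctx_of_prefix {p : List ℕ} (hroot : s.encVertAt p (homV m l.encRoot))
    {α : s.enc ⟶ l.encCC} (hα : m ≫ α = tCC l.enc l.encRoot l.varHeads)
    {q : List ℕ} {j : ℕ} {rest : List ℕ} (hqp : q ++ j :: rest = p) {v : s.encV}
    (hv : s.encVertAt q v) : homV α v = .inr () := by
  induction rest generalizing q j v with
  | nil =>
    subst hqp
    obtain ⟨e, hsrc, htgt⟩ := exists_encE_of_isSome_sub? (isSome_sub?_of_encVertAt hroot)
    rw [← encVertAt_unique hsrc hv]
    refine (GLHom.src_comm α e).symm.trans (encCC_src_eq_ctx (.inl ?_))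
    rw [GLHom.tgt_comm α e, encVertAt_unique htgt hroot]
    exact congrFun (congrArg GLHom.onV hα) l.encRoot
  | cons j' rest ih =>
    have hqp' : (q ++ [j]) ++ j' :: rest = p := by simpa using hqp
    obtain ⟨e, hsrc, htgt⟩ := exists_encE_of_isSome_sub?
      (isSome_sub?_of_isSome_sub?_append (hqp' ▸ isSome_sub?_of_encVertAt hroot))
    rw [← encVertAt_unique hsrc hv]
    refine (GLHom.src_comm α e).symm.trans (encCC_src_eq_ctx (.inr ?_))
    exact (GLHom.tgt_comm α e).trans (ih hqp' htgt)

theorem IsAdherence.homV_encRoot_eq {α : s.enc ⟶ l.encCC} (hα : IsAdherence m α)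
    {v : s.encV} (hv : homV α v = .inl (.inl l.encRoot)) : homV m l.encRoot = v := by
  obtain ⟨z, rfl, hz⟩ :=
    LGraph.exists_homV_of_isPullback hα.2 hv.symm (Flat.bot_le _) (Flat.bot_le _)
  exact hz

theorem IsAdherence.homV_eq {p : List ℕ} (hroot : s.encVertAt p (homV m l.encRoot))
    {α β : s.enc ⟶ l.encCC} (hα : IsAdherence m α) (hβ : IsAdherence m β)
    (q : List ℕ) (v : s.encV) (hv : s.encVertAt q v) : homV α v = homV β v := by
  have h_image : ∀ u, homV α (homV m u) = homV β (homV m u) := fun u =>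
    (congrFun (congrArg GLHom.onV hα.1) u).trans (congrFun (congrArg GLHom.onV hβ.1) u).symm
  induction q using List.reverseRecOn generalizing v with
  | nil =>
    cases p with
    | nil => exact encVertAt_unique hroot hv ▸ h_image l.encRoot
    | cons j rest =>
      rw [homV_eq_ctx_of_prefix hroot hα.1 (q := []) rfl hv,
        homV_eq_ctx_of_prefix hroot hβ.1 (q := []) rfl hv]
  | append_singleton q i ih =>
    by_cases hm : ∃ u, homV m u = v
    · obtain ⟨u, rfl⟩ := hm
      exact h_image u
    by_cases hpre : ∃ j rest, q ++ [i] ++ j :: rest = p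
    · obtain ⟨j, rest, hqp⟩ := hpre
      rw [homV_eq_ctx_of_prefix hroot hα.1 hqp hv, homV_eq_ctx_of_prefix hroot hβ.1 hqp hv]
    obtain ⟨e, hsrc, htgt⟩ := exists_encE_of_isSome_sub? (isSome_sub?_of_encVertAt hv)
    have htv : s.enc.tgt e = v := encVertAt_unique htgt hv
    have hnot_root : ∀ {γ : s.enc ⟶ l.encCC}, IsAdherence m γ →
        l.encCC.tgt (homE γ e) ≠ .inl (.inl l.encRoot) := by
      intro γ hγ h
      refine hm ⟨l.encRoot, hγ.homV_encRoot_eq ?_⟩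
      rw [← htv]
      exact (GLHom.tgt_comm γ e).symm.trans h
    have hsrc_eq : l.encCC.src (homE α e) = l.encCC.src (homE β e) :=
      (GLHom.src_comm α e).trans ((ih _ hsrc).trans (GLHom.src_comm β e).symm)
    have hedge : homE α e = homE β e :=
      encCC_edge_eq_of_src_eq hsrc_eq (GLHom.lE_le α e) (GLHom.lE_le β e)
        (hnot_root hα) (hnot_root hβ)
    rw [← htv]
    exact (GLHom.tgt_comm α e).symm.trans ((congrArg _ hedge).trans (GLHom.tgt_comm β e))

theorem IsAdherence.unique {p : List ℕ} (hroot : s.encVertAt p (homV m l.encRoot))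
    {α β : s.enc ⟶ l.encCC} (hα : IsAdherence m α) (hβ : IsAdherence m β) : α = β :=
  encCC_hom_ext fun v =>
    let ⟨q, hq⟩ := s.exists_encVertAt v
    hα.homV_eq hroot hβ q v hq

end Adherence

end Term

theorem statement_1_general {S : Type} {ar : S → ℕ} {X : Type}
    (ρ : TRSRule S ar X) (s : Term S ar X)
    (p : List ℕ) (m : (ruleEnc ρ).L ⟶ s.enc)
    (hroot : s.encVertAt p (homV m ρ.lhs.encRoot))
    (hmatch : EstablishesMatch (ruleEnc ρ) m) :
    ∃! α : s.enc ⟶ (ruleEnc ρ).L',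
      m ≫ α = (ruleEnc ρ).tL ∧ IsPullback (𝟙 (ruleEnc ρ).L) m (ruleEnc ρ).tL α := by
  obtain ⟨-, α, hα⟩ := hmatch
  exact ⟨α, hα, fun β hβ => Term.IsAdherence.unique hroot hβ hα⟩

/-- If the rule encoding `ρ°` of a linear term rewrite rule
`ρ = l → r` is applied at position `p` in the term encoding `s°` (the match
morphism `m : l° ↣ s°` maps the root of `l°` to the vertex at position `p` of
`s°` and establishes a match), then there is a unique morphism
`α : s° → C[l°↓]` such that `α ∘ m = t_L` and the square with sides
`m, 1_{l°}, α, t_L` is a pullback. -/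
theorem statement_1 {S : Type} {ar : S → ℕ} {X : Type}
    (ρ : TRSRule S ar X) (hρ : ρ.Linear) (s : Term S ar X) (hs : s.Linear)
    (p : List ℕ) (m : (ruleEnc ρ).L ⟶ s.enc)
    (hroot : s.encVertAt p (homV m ρ.lhs.encRoot))
    (hmatch : EstablishesMatch (ruleEnc ρ) m) :
    ∃! α : s.enc ⟶ (ruleEnc ρ).L',
      m ≫ α = (ruleEnc ρ).tL ∧ IsPullback (𝟙 (ruleEnc ρ).L) m (ruleEnc ρ).tL α :=
  statement_1_general ρ s p m hroot hmatch
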